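/- arXiv:0812.5063 — 2 statements merged into one kernel-verified Lean document; each statement's English description precedes it below -/
import Mathlib

section
/- For the irreducible graded sl2-representation V_λ^w (highest weight λ, highest weight vector of parity w), the dual representation (V_λ^w)^* is isomorphic as a graded sl2-representation to V_λ^{w+λ}. -/
variable {K V : Type*} [Field K] [AddCommGroup V] [Module K V]

/-- An sl2-triple of linear endomorphisms: [h,e]=2e, [h,f]=-2f, [e,f]=h. -/
def Sl2Rel (e h f : Module.End K V) : Prop :=
  h * e - e * h = 2 • e ∧ h * f - f * h = -(2 • f) ∧ e * f - f * e = h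

/-- A submodule invariant under the sl2-action. -/
def Sl2Inv (e h f : Module.End K V) (W : Submodule K V) : Prop :=
  (∀ x ∈ W, e x ∈ W) ∧ (∀ x ∈ W, h x ∈ W) ∧ (∀ x ∈ W, f x ∈ W)

/-- A Z/2Z-grading V = V0 ⊕ V1 compatible with the graded sl2 (h even, e and f odd). -/
def Sl2Grading (e h f : Module.End K V) (V0 V1 : Submodule K V) : Prop :=
  IsCompl V0 V1 ∧ (∀ x ∈ V0, h x ∈ V0) ∧ (∀ x ∈ V1, h x ∈ V1) ∧
    (∀ x ∈ V0, e x ∈ V1) ∧ (∀ x ∈ V1, e x ∈ V0) ∧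
    (∀ x ∈ V0, f x ∈ V1) ∧ (∀ x ∈ V1, f x ∈ V0)

/-- A submodule which is graded with respect to the grading (V0, V1). -/
def Sl2GradedSub (V0 V1 W : Submodule K V) : Prop :=
  W = (W ⊓ V0) ⊔ (W ⊓ V1)

/-!
The contragredient action `-g.dualMap` of an sl2-triple is again an sl2-triple, because
transposition reverses products and hence negates commutators, and the annihilators of `V1` and
`V0` form a compatible grading of the dual. An invariant subspace of the dual has an invariant
coannihilator in `V`, so irreducibility passes to the dual. Finally, `V` has the basis `f ^ k v`
(`k ≤ λ`) of `h`-weights `λ - 2k` and parities `w + k`; the coordinate functional of the lowest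
vector `f ^ λ v` is killed by `-e.dualMap`, has weight `λ` under `-h.dualMap`, and vanishes on
the graded piece not containing `f ^ λ v`, so it is a highest weight vector of parity `w + λ`.
-/

open Module

variable {e h f : Module.End K V}

lemma commutator_neg_dualMap (a b : Module.End K V) :
    (-a.dualMap) * (-b.dualMap) - (-b.dualMap) * (-a.dualMap) = -(a * b - b * a).dualMap := by
  ext φ x
  simp only [LinearMap.sub_apply, Module.End.mul_apply, LinearMap.neg_apply,
    LinearMap.dualMap_apply, map_sub, map_neg]
  ring

namespace Sl2Rel

section

variable (hrel : Sl2Rel e h f) {v : V}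
include hrel

lemma h_f_apply (x : V) : h (f x) = f (h x) - (2 : K) • f x := by
  have := congrArg (· x) hrel.2.1
  simp only [LinearMap.sub_apply, Module.End.mul_apply, LinearMap.neg_apply,
    LinearMap.smul_apply] at this
  linear_combination (norm := module) this

lemma e_f_apply (x : V) : e (f x) = f (e x) + h x := by
  have := congrArg (· x) hrel.2.2
  simp only [LinearMap.sub_apply, Module.End.mul_apply] at this
  linear_combination (norm := module) this

lemma h_pow_f_apply {μ : K} (hvh : h v = μ • v) (k : ℕ) :
    h ((f ^ k) v) = (μ - 2 * k) • (f ^ k) v := by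
  induction k with
  | zero => simpa using hvh
  | succ k ih =>
    rw [pow_succ', Module.End.mul_apply, hrel.h_f_apply, ih, map_smul]
    push_cast
    module

lemma e_pow_succ_f_apply {μ : K} (hve : e v = 0) (hvh : h v = μ • v) (k : ℕ) :
    e ((f ^ (k + 1)) v) = ((k + 1) * (μ - k)) • (f ^ k) v := by
  induction k with
  | zero => simp [hrel.e_f_apply, hve, hvh]
  | succ k ih =>
    rw [pow_succ' f (k + 1), Module.End.mul_apply, hrel.e_f_apply, ih, map_smul,
      ← Module.End.mul_apply f, ← pow_succ', hrel.h_pow_f_apply hvh]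
    push_cast
    module

lemma exists_pow_f_apply_eq_zero [CharZero K] [FiniteDimensional K V] {μ : K}
    (hvh : h v = μ • v) : ∃ k, (f ^ k) v = 0 := by
  by_contra! hne
  exact Module.Finite.not_linearIndependent_of_infinite _ <|
    h.eigenvectors_linearIndependent' (fun k : ℕ => μ - 2 * k)
      (fun i j hij => by simpa using hij) _
      (fun k => Module.End.hasEigenvector_iff.2
        ⟨Module.End.mem_eigenspace_iff.2 (hrel.h_pow_f_apply hvh k), hne k⟩)

section

variable [CharZero K] {n : ℕ} (hve : e v = 0) (hvh : h v = (n : K) • v)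
include hve hvh

lemma pow_f_apply_ne_zero (hv : v ≠ 0) {k : ℕ} (hk : k ≤ n) : (f ^ k) v ≠ 0 := by
  induction k with
  | zero => simpa using hv
  | succ k ih =>
    intro hz
    have hcoef : ((k : K) + 1) * ((n : K) - k) ≠ 0 :=
      mul_ne_zero (Nat.cast_add_one_ne_zero k) (sub_ne_zero.2 (by exact_mod_cast (by omega)))
    have := hrel.e_pow_succ_f_apply hve hvh k
    rw [hz, map_zero, eq_comm, smul_eq_zero] at this
    exact ih (by omega) (this.resolve_left hcoef)

lemma pow_f_apply_eq_zero [FiniteDimensional K V] (hv : v ≠ 0) : (f ^ (n + 1)) v = 0 := by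
  obtain ⟨k, hk, hk1⟩ := Nat.exists_not_and_succ_of_not_zero_of_exists
    (p := fun k => (f ^ k) v = 0) (by simpa using hv) (hrel.exists_pow_f_apply_eq_zero hvh)
  have := hrel.e_pow_succ_f_apply hve hvh k
  rw [hk1, map_zero, eq_comm, smul_eq_zero, mul_eq_zero, sub_eq_zero] at this
  obtain rfl : n = k := by
    exact_mod_cast (this.resolve_right hk).resolve_left (Nat.cast_add_one_ne_zero k)
  exact hk1

lemma linearIndependent_pow_f_apply (hv : v ≠ 0) :
    LinearIndependent K (fun i : Fin (n + 1) => (f ^ (i : ℕ)) v) :=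
  h.eigenvectors_linearIndependent' (fun i : Fin (n + 1) => (n : K) - 2 * (i : ℕ))
    (fun i j hij => by simpa [Fin.ext_iff] using hij) _
    (fun i => Module.End.hasEigenvector_iff.2
      ⟨Module.End.mem_eigenspace_iff.2 (hrel.h_pow_f_apply hvh i),
        hrel.pow_f_apply_ne_zero hve hvh hv i.is_le⟩)

lemma span_pow_f_apply_eq_top [FiniteDimensional K V]
    (hirr : ∀ W : Submodule K V, Sl2Inv e h f W → W = ⊥ ∨ W = ⊤) (hv : v ≠ 0) :
    Submodule.span K (Set.range fun i : Fin (n + 1) => (f ^ (i : ℕ)) v) = ⊤ := by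
  set W := Submodule.span K (Set.range fun i : Fin (n + 1) => (f ^ (i : ℕ)) v)
  have hmem (k : ℕ) : (f ^ k) v ∈ W := by
    by_cases hk : k ≤ n
    · exact Submodule.subset_span ⟨⟨k, by omega⟩, rfl⟩
    · obtain ⟨j, rfl⟩ : ∃ j, k = j + (n + 1) := ⟨k - (n + 1), by omega⟩
      rw [pow_add, Module.End.mul_apply, hrel.pow_f_apply_eq_zero hve hvh hv, map_zero]
      exact W.zero_mem
  have hinv (g : Module.End K V) (hg : ∀ k, g ((f ^ k) v) ∈ W) : ∀ x ∈ W, g x ∈ W :=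
    fun x hx => (Submodule.span_le (p := W.comap g)).2 (by rintro _ ⟨i, rfl⟩; exact hg i) hx
  refine (hirr W ⟨hinv e fun k => ?_, hinv h fun k => ?_, hinv f fun k => ?_⟩).resolve_left
    fun hW => hv (by simpa [hW] using hmem 0)
  · cases k with
    | zero => simp [hve]
    | succ k => rw [hrel.e_pow_succ_f_apply hve hvh]; exact W.smul_mem _ (hmem k)
  · rw [hrel.h_pow_f_apply hvh]; exact W.smul_mem _ (hmem k)
  · rw [← Module.End.mul_apply, ← pow_succ']; exact hmem (k + 1)

lemma exists_basis_pow_f_apply [FiniteDimensional K V]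
    (hirr : ∀ W : Submodule K V, Sl2Inv e h f W → W = ⊥ ∨ W = ⊤) (hv : v ≠ 0) :
    ∃ B : Basis (Fin (n + 1)) K V, ∀ i, B i = (f ^ (i : ℕ)) v :=
  ⟨Basis.mk (hrel.linearIndependent_pow_f_apply hve hvh hv)
    (hrel.span_pow_f_apply_eq_top hve hvh hirr hv).ge, Basis.mk_apply _ _⟩

end

section

variable {n : ℕ} (B : Basis (Fin (n + 1)) K V) (hB : ∀ i, B i = (f ^ (i : ℕ)) v)
include hB

lemma neg_dualMap_e_coord_last {μ : K} (hve : e v = 0) (hvh : h v = μ • v) :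
    (-e.dualMap) (B.coord (Fin.last n)) = 0 := by
  refine B.ext fun i => ?_
  rw [LinearMap.zero_apply, LinearMap.neg_apply, LinearMap.neg_apply, LinearMap.dualMap_apply,
    hB, neg_eq_zero]
  cases i using Fin.cases with
  | zero => simp [hve]
  | succ j =>
    rw [Fin.val_succ, hrel.e_pow_succ_f_apply hve hvh, map_smul, ← Fin.val_castSucc, ← hB,
      B.coord_apply, B.repr_self, Finsupp.single_apply, if_neg (Fin.castSucc_ne_last j),
      smul_zero]

lemma neg_dualMap_h_coord_last (hvh : h v = (n : K) • v) :
    (-h.dualMap) (B.coord (Fin.last n)) = (n : K) • B.coord (Fin.last n) := by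
  refine B.ext fun i => ?_
  rw [LinearMap.smul_apply, LinearMap.neg_apply, LinearMap.neg_apply, LinearMap.dualMap_apply,
    hB, hrel.h_pow_f_apply hvh, map_smul, ← hB, B.coord_apply, B.repr_self, Finsupp.single_apply]
  split_ifs with hi
  · subst hi
    simp only [Fin.val_last, smul_eq_mul, mul_one]
    ring
  · simp

end

end

lemma neg_dualMap (hrel : Sl2Rel e h f) : Sl2Rel (-e.dualMap) (-h.dualMap) (-f.dualMap) := by
  obtain ⟨hhe, hhf, hef⟩ := hrel
  refine ⟨?_, ?_, ?_⟩ <;> rw [commutator_neg_dualMap] <;> ext φ x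
  · simp [hhe]
  · simp [hhf]
  · simp [hef]

end Sl2Rel

lemma Sl2Inv.dualCoannihilator {W : Submodule K (Dual K V)}
    (hW : Sl2Inv (-e.dualMap) (-h.dualMap) (-f.dualMap) W) :
    Sl2Inv e h f W.dualCoannihilator := by
  have preserves {g : Module.End K V} (hg : ∀ φ ∈ W, (-g.dualMap) φ ∈ W) :
      ∀ x ∈ W.dualCoannihilator, g x ∈ W.dualCoannihilator := fun x hx =>
    (Submodule.mem_dualCoannihilator _).2 fun φ hφ =>
      neg_eq_zero.1 ((Submodule.mem_dualCoannihilator _).1 hx _ (hg φ hφ))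
  exact ⟨preserves hW.1, preserves hW.2.1, preserves hW.2.2⟩

lemma irreducible_neg_dualMap [FiniteDimensional K V]
    (hirr : ∀ W : Submodule K V, Sl2Inv e h f W → W = ⊥ ∨ W = ⊤) :
    ∀ W : Submodule K (Dual K V), Sl2Inv (-e.dualMap) (-h.dualMap) (-f.dualMap) W →
      W = ⊥ ∨ W = ⊤ := by
  intro W hW
  rw [← Subspace.dualCoannihilator_dualAnnihilator_eq (W := W)]
  rcases hirr _ hW.dualCoannihilator with hbot | htop
  · simp [hbot]
  · simp [htop]

namespace Sl2Grading

variable {V0 V1 : Submodule K V}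

lemma pow_f_apply_mem (hgr : Sl2Grading e h f V0 V1) {p : ZMod 2} {x : V}
    (hx : if p = 0 then x ∈ V0 else x ∈ V1) (k : ℕ) :
    if p + k = 0 then (f ^ k) x ∈ V0 else (f ^ k) x ∈ V1 := by
  obtain ⟨-, -, -, -, -, hf0, hf1⟩ := hgr
  have add_one_eq_zero : ∀ a : ZMod 2, a + 1 = 0 ↔ a ≠ 0 := by decide
  induction k with
  | zero => simpa using hx
  | succ k ih =>
    rw [pow_succ', Module.End.mul_apply, Nat.cast_succ, ← add_assoc]
    split_ifs at ih with hk <;> simp only [add_one_eq_zero, hk, ne_eq, not_true, not_false_eq_true,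
      if_true, if_false]
    · exact hf0 _ ih
    · exact hf1 _ ih

lemma dualAnnihilator (hgr : Sl2Grading e h f V0 V1) :
    Sl2Grading (-e.dualMap) (-h.dualMap) (-f.dualMap) V1.dualAnnihilator V0.dualAnnihilator := by
  obtain ⟨hc, hh0, hh1, he0, he1, hf0, hf1⟩ := hgr
  have preserves {A B : Submodule K V} {g : Module.End K V} (hg : ∀ x ∈ A, g x ∈ B) :
      ∀ φ ∈ B.dualAnnihilator, (-g.dualMap) φ ∈ A.dualAnnihilator := fun φ hφ =>
    neg_mem <| (Submodule.mem_dualAnnihilator _).2 fun x hx =>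
      (Submodule.mem_dualAnnihilator _).1 hφ _ (hg x hx)
  exact ⟨Subspace.isCompl_dualAnnihilator hc.symm, preserves hh1, preserves hh0, preserves he0,
    preserves he1, preserves hf0, preserves hf1⟩

end Sl2Grading

lemma Module.Basis.coord_mem_dualAnnihilator {ι : Type*} {A C : Submodule K V}
    (hAC : IsCompl A C) (B : Basis ι K V) (hB : ∀ i, B i ∈ A ∨ B i ∈ C) {j : ι}
    (hj : B j ∈ A) : B.coord j ∈ C.dualAnnihilator := by
  have hzero : B.coord j ∘ₗ C.projection A hAC.symm = 0 := B.ext fun i => by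
    rcases hB i with hi | hi
    · simp [Submodule.projection_apply_of_mem_right _ hi]
    · have hij : i ≠ j := by
        rintro rfl
        exact B.ne_zero i (Submodule.disjoint_def.1 hAC.disjoint _ hj hi)
      simp [Submodule.projection_apply_of_mem_left _ hi, hij]
  refine (Submodule.mem_dualAnnihilator _).2 fun x hx => ?_
  rw [← Submodule.projection_apply_of_mem_left hAC.symm hx]
  exact LinearMap.congr_fun hzero x

theorem stmt10_general {K V : Type*} [Field K] [CharZero K] [AddCommGroup V] [Module K V]
    [FiniteDimensional K V]
    (e h f : Module.End K V) (hrel : Sl2Rel e h f)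
    (V0 V1 : Submodule K V) (hgr : Sl2Grading e h f V0 V1)
    (hirr : ∀ W : Submodule K V, Sl2Inv e h f W → W = ⊥ ∨ W = ⊤)
    (lam : ℕ) (w : ZMod 2)
    (v : V) (hv : v ≠ 0) (hve : e v = 0) (hvh : h v = (lam : K) • v)
    (hvpar : if w = 0 then v ∈ V0 else v ∈ V1)
    -- the contragredient action on the dual space
    (eD hD fD : Module.End K (Module.Dual K V))
    (heD : ∀ (φ : Module.Dual K V) (x : V), eD φ x = -φ (e x))
    (hhD : ∀ (φ : Module.Dual K V) (x : V), hD φ x = -φ (h x))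
    (hfD : ∀ (φ : Module.Dual K V) (x : V), fD φ x = -φ (f x))
    -- the induced grading on the dual space
    (D0 D1 : Submodule K (Module.Dual K V))
    (hD0 : ∀ φ : Module.Dual K V, φ ∈ D0 ↔ ∀ x ∈ V1, φ x = 0)
    (hD1 : ∀ φ : Module.Dual K V, φ ∈ D1 ↔ ∀ x ∈ V0, φ x = 0) :
    Sl2Rel eD hD fD ∧ Sl2Grading eD hD fD D0 D1 ∧
    (∀ W : Submodule K (Module.Dual K V), Sl2Inv eD hD fD W → W = ⊥ ∨ W = ⊤) ∧
    ∃ φ : Module.Dual K V, φ ≠ 0 ∧ eD φ = 0 ∧ hD φ = (lam : K) • φ ∧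
      (if w + (lam : ZMod 2) = 0 then φ ∈ D0 else φ ∈ D1) := by
  obtain rfl : eD = -e.dualMap := by ext φ x; exact heD φ x
  obtain rfl : hD = -h.dualMap := by ext φ x; exact hhD φ x
  obtain rfl : fD = -f.dualMap := by ext φ x; exact hfD φ x
  obtain rfl : D0 = V1.dualAnnihilator := by
    ext φ; exact (hD0 φ).trans (Submodule.mem_dualAnnihilator φ).symm
  obtain rfl : D1 = V0.dualAnnihilator := by
    ext φ; exact (hD1 φ).trans (Submodule.mem_dualAnnihilator φ).symm
  obtain ⟨B, hB⟩ := hrel.exists_basis_pow_f_apply hve hvh hirr hv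
  refine ⟨hrel.neg_dualMap, hgr.dualAnnihilator, irreducible_neg_dualMap hirr,
    B.coord (Fin.last lam), by simpa using B.dualBasis.ne_zero (Fin.last lam),
    hrel.neg_dualMap_e_coord_last B hB hve hvh, hrel.neg_dualMap_h_coord_last B hB hvh, ?_⟩
  have hparity (i : Fin (lam + 1)) :
      if w + (i : ℕ) = 0 then B i ∈ V0 else B i ∈ V1 := hB i ▸ hgr.pow_f_apply_mem hvpar i
  have hpiece (i : Fin (lam + 1)) : B i ∈ V0 ∨ B i ∈ V1 := by
    have := hparity i
    split_ifs at this <;> simp [this]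
  have hlast := hparity (Fin.last lam)
  rw [Fin.val_last] at hlast
  split_ifs at hlast ⊢
  · exact B.coord_mem_dualAnnihilator hgr.1 hpiece hlast
  · exact B.coord_mem_dualAnnihilator hgr.1.symm (fun i => (hpiece i).symm) hlast

/-- The dual of the irreducible graded sl2-representation V_λ^w, with the
contragredient action and the induced grading, is isomorphic as a graded representation
to V_λ^{w+λ}: i.e. it is an irreducible graded representation possessing a highest weight
vector of weight λ and of parity w + λ. -/
theorem stmt10 {K V : Type*} [Field K] [CharZero K] [AddCommGroup V] [Module K V]
    [FiniteDimensional K V] [Nontrivial V]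
    (e h f : Module.End K V) (hrel : Sl2Rel e h f)
    (V0 V1 : Submodule K V) (hgr : Sl2Grading e h f V0 V1)
    (hirr : ∀ W : Submodule K V, Sl2Inv e h f W → W = ⊥ ∨ W = ⊤)
    (lam : ℕ) (w : ZMod 2)
    (v : V) (hv : v ≠ 0) (hve : e v = 0) (hvh : h v = (lam : K) • v)
    (hvpar : if w = 0 then v ∈ V0 else v ∈ V1)
    -- the contragredient action on the dual space
    (eD hD fD : Module.End K (Module.Dual K V))
    (heD : ∀ (φ : Module.Dual K V) (x : V), eD φ x = -φ (e x))
    (hhD : ∀ (φ : Module.Dual K V) (x : V), hD φ x = -φ (h x))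
    (hfD : ∀ (φ : Module.Dual K V) (x : V), fD φ x = -φ (f x))
    -- the induced grading on the dual space
    (D0 D1 : Submodule K (Module.Dual K V))
    (hD0 : ∀ φ : Module.Dual K V, φ ∈ D0 ↔ ∀ x ∈ V1, φ x = 0)
    (hD1 : ∀ φ : Module.Dual K V, φ ∈ D1 ↔ ∀ x ∈ V0, φ x = 0) :
    Sl2Rel eD hD fD ∧ Sl2Grading eD hD fD D0 D1 ∧
    (∀ W : Submodule K (Module.Dual K V), Sl2Inv eD hD fD W → W = ⊥ ∨ W = ⊤) ∧
    ∃ φ : Module.Dual K V, φ ≠ 0 ∧ eD φ = 0 ∧ hD φ = (lam : K) • φ ∧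
      (if w + (lam : ZMod 2) = 0 then φ ∈ D0 else φ ∈ D1) :=
  stmt10_general e h f hrel V0 V1 hgr hirr lam w v hv hve hvh hvpar eD hD fD heD hhD hfD D0 D1 hD0
    hD1
end

section
/- The tensor product of irreducible graded sl2-representations satisfies the graded Clebsch-Gordan rule: V_{λ1}^{w1} ⊗ V_{λ2}^{w2} ≅ ⊕_{i=0}^{min(λ1,λ2)} V_{λ1+λ2-2i}^{w1+w2+i}. -/
/-!
A highest weight vector `v` of weight `λ` generates an irreducible module through its `f`-string
`v, f v, …, fᵏ v` (`k ≤ λ`): `e ^ k` maps `fᵏ v` to a nonzero multiple of `v`, so every nonzero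
`e`,`f`-stable subspace contains `v`. In particular `dim V_λ = λ + 1`.

In `V_{λ₁} ⊗ V_{λ₂}` and for `i ≤ min λ₁ λ₂`, the vector `uᵢ = ∑ₖ cₖ fᵏ v ⊗ fⁱ⁻ᵏ w` is killed
by `e` when the `cₖ` satisfy a two-term recursion; it has weight `λ₁ + λ₂ - 2i` and, `f` being
odd, parity `w₁ + w₂ + i`. The strings of the `uᵢ` are jointly linearly independent: applying
`e ^ j` to a relation, with `j` the top exponent occurring, leaves a relation between highest
weight vectors of distinct weights. Their total length `∑ᵢ (λ₁ + λ₂ - 2i + 1) = (λ₁ + 1)(λ₂ + 1)`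
is the dimension of the tensor product, so their spans decompose it.
-/

variable {K V : Type*} [Field K] [AddCommGroup V] [Module K V]

section SigmaFamily

variable {ι : Type*} {κ : ι → Type*}

theorem iSup_span_range_sigma_fiber (x : (Σ i, κ i) → V) :
    ⨆ i, Submodule.span K (Set.range fun k ↦ x ⟨i, k⟩) = Submodule.span K (Set.range x) := by
  rw [Set.range_sigma_eq_iUnion_range, Submodule.span_iUnion]

theorem LinearIndependent.iSupIndep_span_range_sigma_fiber {x : (Σ i, κ i) → V}
    (hx : LinearIndependent K x) :
    iSupIndep fun i ↦ Submodule.span K (Set.range fun k ↦ x ⟨i, k⟩) := by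
  have hfiber : ∀ S : Set ι, ⨆ i ∈ S, Submodule.span K (Set.range fun k ↦ x ⟨i, k⟩) =
      Submodule.span K (x '' {p | p.1 ∈ S}) := by
    intro S
    simp_rw [← Submodule.span_iUnion]
    congr 1
    ext y
    simp
  intro i
  have hi := hfiber {i}
  simp only [Set.mem_singleton_iff, iSup_iSup_eq_left] at hi
  have hrest := hfiber {j | j ≠ i}
  simp only [Set.mem_ofPred_eq] at hrest
  simp only [hi, hrest]
  exact hx.disjoint_span_image (Set.disjoint_left.2 fun p hp hp' ↦ hp' hp)

end SigmaFamily

namespace Sl2Rel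

variable {e h f : Module.End K V} {u : V} {μ : K}

theorem h_apply_f (hrel : Sl2Rel e h f) (x : V) : h (f x) = f (h x) - (2 : K) • f x := by
  have := LinearMap.congr_fun hrel.2.1 x
  simp only [LinearMap.sub_apply, LinearMap.neg_apply, LinearMap.smul_apply,
    Module.End.mul_apply, ofNat_smul_eq_nsmul] at this ⊢
  rw [sub_eq_iff_eq_add] at this
  rw [this]; abel

theorem e_apply_f (hrel : Sl2Rel e h f) (x : V) : e (f x) = f (e x) + h x := by
  have := LinearMap.congr_fun hrel.2.2 x
  simp only [LinearMap.sub_apply, Module.End.mul_apply] at this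
  rw [← this]; abel

theorem h_apply_f_pow (hrel : Sl2Rel e h f) (huh : h u = μ • u) (k : ℕ) :
    h ((f ^ k) u) = (μ - 2 * k) • (f ^ k) u := by
  induction k with
  | zero => simpa using huh
  | succ k ih =>
    rw [pow_succ', Module.End.mul_apply, hrel.h_apply_f, ih, map_smul]
    match_scalars; ring

theorem e_apply_f_pow_succ (hrel : Sl2Rel e h f) (hue : e u = 0) (huh : h u = μ • u) (k : ℕ) :
    e ((f ^ (k + 1)) u) = ((k + 1) * (μ - k)) • (f ^ k) u := by
  induction k with
  | zero => simp [hrel.e_apply_f, hue, huh]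
  | succ k ih =>
    rw [pow_succ', Module.End.mul_apply, hrel.e_apply_f, ih, hrel.h_apply_f_pow huh, map_smul,
      ← Module.End.mul_apply f, ← pow_succ']
    match_scalars; ring

theorem e_pow_apply_f_pow_of_lt (hrel : Sl2Rel e h f) (hue : e u = 0) (huh : h u = μ • u)
    {j s : ℕ} (hjs : j < s) : (e ^ s) ((f ^ j) u) = 0 := by
  induction j generalizing s with
  | zero =>
    obtain ⟨t, rfl⟩ := Nat.exists_eq_add_of_lt hjs
    simp [pow_succ, hue]
  | succ j ih =>
    obtain ⟨t, rfl⟩ := Nat.exists_eq_add_of_lt hjs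
    rw [pow_succ, Module.End.mul_apply, hrel.e_apply_f_pow_succ hue huh, map_smul,
      ih (by omega), smul_zero]

theorem exists_e_pow_apply_f_pow [CharZero K] (hrel : Sl2Rel e h f) (hue : e u = 0) {n : ℕ}
    (huh : h u = (n : K) • u) {j : ℕ} (hj : j ≤ n) :
    ∃ c : K, c ≠ 0 ∧ (e ^ j) ((f ^ j) u) = c • u := by
  induction j with
  | zero => exact ⟨1, one_ne_zero, by simp⟩
  | succ j ih =>
    obtain ⟨c, hc, hcu⟩ := ih (by omega)
    have hnj : (n : K) - j ≠ 0 := by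
      rw [sub_ne_zero, Ne, Nat.cast_inj]; omega
    refine ⟨((j : K) + 1) * (n - j) * c,
      mul_ne_zero (mul_ne_zero (Nat.cast_add_one_ne_zero j) hnj) hc, ?_⟩
    rw [pow_succ, Module.End.mul_apply, hrel.e_apply_f_pow_succ hue huh, map_smul, hcu, smul_smul]

theorem f_pow_ne_zero [CharZero K] (hrel : Sl2Rel e h f) (hu : u ≠ 0) (hue : e u = 0) {n : ℕ}
    (huh : h u = (n : K) • u) {k : ℕ} (hk : k ≤ n) : (f ^ k) u ≠ 0 := by
  obtain ⟨c, hc, hcu⟩ := hrel.exists_e_pow_apply_f_pow hue huh hk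
  intro h0
  rw [h0, map_zero, eq_comm, smul_eq_zero] at hcu
  tauto

theorem f_pow_succ_apply_eq_zero [CharZero K] [FiniteDimensional K V] (hrel : Sl2Rel e h f)
    (hue : e u = 0) {n : ℕ} (huh : h u = (n : K) • u) : (f ^ (n + 1)) u = 0 := by
  classical
  have hex : ∃ N, (f ^ N) u = 0 := by
    by_contra! hne
    have hweight : Function.Injective fun k : ℕ ↦ (n : K) - 2 * k := fun j k hjk ↦ by
      simpa using hjk
    exact Module.Finite.not_linearIndependent_of_infinite _
      (Module.End.eigenvectors_linearIndependent' h _ hweight _ fun k ↦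
        ⟨Module.End.mem_eigenspace_iff.2 (hrel.h_apply_f_pow huh k), hne k⟩)
  obtain ⟨N, hN, hmin⟩ : ∃ N, (f ^ N) u = 0 ∧ ∀ k < N, (f ^ k) u ≠ 0 :=
    ⟨Nat.find hex, Nat.find_spec hex, fun k hk ↦ Nat.find_min hex hk⟩
  rcases N with _ | P
  · simp_all
  -- the first vanishing `f ^ (P + 1) u` is killed by `e`, which forces the weight to be `P`
  have hzero := congrArg e hN
  rw [hrel.e_apply_f_pow_succ hue huh, map_zero, smul_eq_zero] at hzero
  have hnP : n = P := by
    rcases hzero with h0 | h0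
    · rcases mul_eq_zero.1 h0 with h1 | h1
      · exact absurd h1 (Nat.cast_add_one_ne_zero P)
      · exact_mod_cast sub_eq_zero.1 h1
    · exact absurd h0 (hmin P P.lt_succ_self)
  rwa [hnP]

end Sl2Rel

def stringSpan (f : Module.End K V) (u : V) (n : ℕ) : Submodule K V :=
  Submodule.span K (Set.range fun k : Fin (n + 1) ↦ (f ^ (k : ℕ)) u)

theorem f_pow_mem_stringSpan (f : Module.End K V) (u : V) {n k : ℕ} (hk : k ≤ n) :
    (f ^ k) u ∈ stringSpan f u n :=
  Submodule.subset_span ⟨⟨k, by omega⟩, rfl⟩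

theorem mem_stringSpan_self (f : Module.End K V) (u : V) (n : ℕ) : u ∈ stringSpan f u n := by
  simpa using f_pow_mem_stringSpan f u (Nat.zero_le n)

namespace Sl2Rel

variable {e h f : Module.End K V} {u : V} {n : ℕ}

theorem sl2Inv_stringSpan (hrel : Sl2Rel e h f) (hue : e u = 0) (huh : h u = (n : K) • u)
    (htop : (f ^ (n + 1)) u = 0) : Sl2Inv e h f (stringSpan f u n) := by
  have hgen : ∀ (g : Module.End K V),
      (∀ k ≤ n, g ((f ^ k) u) ∈ stringSpan f u n) →
        ∀ x ∈ stringSpan f u n, g x ∈ stringSpan f u n :=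
    fun g hg x hx ↦ (Submodule.span_le (p := (stringSpan f u n).comap g)).2
      (by rintro _ ⟨k, rfl⟩; exact hg k (Nat.lt_succ_iff.1 k.2)) hx
  refine ⟨hgen e fun k hk ↦ ?_, hgen h fun k hk ↦ ?_, hgen f fun k hk ↦ ?_⟩
  · rcases k with _ | k
    · simp [hue]
    · rw [hrel.e_apply_f_pow_succ hue huh]
      exact Submodule.smul_mem _ _ (f_pow_mem_stringSpan f u (by omega))
  · rw [hrel.h_apply_f_pow huh]
    exact Submodule.smul_mem _ _ (f_pow_mem_stringSpan f u hk)
  · rw [← Module.End.mul_apply, ← pow_succ']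
    rcases hk.lt_or_eq with hlt | rfl
    · exact f_pow_mem_stringSpan f u hlt
    · simp [htop]

theorem linearIndependent_f_pow [CharZero K] (hrel : Sl2Rel e h f) (hu : u ≠ 0) (hue : e u = 0)
    (huh : h u = (n : K) • u) : LinearIndependent K fun k : Fin (n + 1) ↦ (f ^ (k : ℕ)) u := by
  have hweight : Function.Injective fun k : Fin (n + 1) ↦ (n : K) - 2 * (k : ℕ) :=
    fun j k hjk ↦ by simpa [Fin.val_inj] using hjk
  exact Module.End.eigenvectors_linearIndependent' h _ hweight _ fun k ↦
    ⟨Module.End.mem_eigenspace_iff.2 (hrel.h_apply_f_pow huh k),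
      hrel.f_pow_ne_zero hu hue huh (by omega)⟩

theorem finrank_eq_add_one [CharZero K] [FiniteDimensional K V] (hrel : Sl2Rel e h f)
    (hirr : ∀ U : Submodule K V, Sl2Inv e h f U → U = ⊥ ∨ U = ⊤)
    (hu : u ≠ 0) (hue : e u = 0) (huh : h u = (n : K) • u) : Module.finrank K V = n + 1 := by
  have hspan : stringSpan f u n = ⊤ := by
    refine (hirr _ (hrel.sl2Inv_stringSpan hue huh
      (hrel.f_pow_succ_apply_eq_zero hue huh))).resolve_left fun hbot ↦ hu ?_
    simpa [hbot] using mem_stringSpan_self f u n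
  rw [← finrank_top, ← hspan, stringSpan,
    finrank_span_eq_card (hrel.linearIndependent_f_pow hu hue huh), Fintype.card_fin]

theorem eq_bot_or_eq_stringSpan [CharZero K] (hrel : Sl2Rel e h f) (hue : e u = 0)
    (huh : h u = (n : K) • u) {U : Submodule K V} (hle : U ≤ stringSpan f u n)
    (he : ∀ x ∈ U, e x ∈ U) (hf : ∀ x ∈ U, f x ∈ U) : U = ⊥ ∨ U = stringSpan f u n := by
  classical
  refine or_iff_not_imp_left.2 fun hbot ↦ le_antisymm hle ?_
  obtain ⟨x, hxU, hx0⟩ := (Submodule.ne_bot_iff U).1 hbot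
  obtain ⟨d, rfl⟩ := (Submodule.mem_span_range_iff_exists_fun K).1 (hle hxU)
  obtain ⟨j, hdj, hjmax⟩ : ∃ j, d j ≠ 0 ∧ ∀ k, d k ≠ 0 → k ≤ j := by
    obtain ⟨k, hk⟩ : ∃ k, d k ≠ 0 := by
      by_contra! hd
      simp [hd] at hx0
    obtain ⟨j, hj, hjmax⟩ :=
      (Finset.univ.filter (d · ≠ 0)).exists_max_image id ⟨k, by simp [hk]⟩
    exact ⟨j, (Finset.mem_filter.1 hj).2, fun k hk ↦ hjmax k (by simp [hk])⟩
  obtain ⟨c, hc, hcu⟩ := hrel.exists_e_pow_apply_f_pow hue huh (Nat.lt_succ_iff.1 j.2)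
  -- `e ^ j` kills every term below the top one and sends the top one to a multiple of `u`
  have htop : (e ^ (j : ℕ)) (∑ k, d k • (f ^ (k : ℕ)) u) = (d j * c) • u := by
    rw [map_sum, Finset.sum_eq_single j, map_smul, hcu, smul_smul]
    · intro k _ hkj
      by_cases hdk : d k = 0
      · simp [hdk]
      · rw [map_smul, hrel.e_pow_apply_f_pow_of_lt hue huh
          (lt_of_le_of_ne (hjmax k hdk) (Fin.val_ne_of_ne hkj)), smul_zero]
    · simp
  have huU : u ∈ U := (U.smul_mem_iff (mul_ne_zero hdj hc)).1
    (htop ▸ Module.End.pow_apply_mem_of_forall_mem _ he _ hxU)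
  exact Submodule.span_le.2 (by
    rintro _ ⟨k, rfl⟩; exact Module.End.pow_apply_mem_of_forall_mem _ hf _ huU)

theorem linearIndependent_sigma_f_pow [CharZero K] (hrel : Sl2Rel e h f) {ι : Type*} {n : ι → ℕ}
    (hn : Function.Injective n) {u : ι → V} (hu : ∀ i, u i ≠ 0) (hue : ∀ i, e (u i) = 0)
    (huh : ∀ i, h (u i) = (n i : K) • u i) :
    LinearIndependent K fun p : Σ i, Fin (n i + 1) ↦ (f ^ (p.2 : ℕ)) (u p.1) := by
  classical
  rw [linearIndependent_iff']
  intro s g hsum p0 hp0s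
  by_contra hp0
  obtain ⟨q, hq, hqmax⟩ := (s.filter (g · ≠ 0)).exists_max_image (fun p ↦ (p.2 : ℕ))
    ⟨p0, by simp [hp0s, hp0]⟩
  obtain ⟨hqs, hgq⟩ := Finset.mem_filter.1 hq
  obtain ⟨c, hc, hcu⟩ :=
    hrel.exists_e_pow_apply_f_pow (hue q.1) (huh q.1) (Nat.lt_succ_iff.1 q.2.2)
  -- after applying `e ^ q.2`, every other term is a multiple of some `u i` with `i ≠ q.1`
  have hrest : ∀ p ∈ s.erase q, g p • (e ^ (q.2 : ℕ)) ((f ^ (p.2 : ℕ)) (u p.1)) ∈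
      ⨆ (ν : K) (_ : ν ≠ n q.1), Module.End.eigenspace h ν := by
    intro p hp
    obtain ⟨hpq, hps⟩ := Finset.mem_erase.1 hp
    by_cases hgp : g p = 0
    · simp [hgp]
    rcases (hqmax p (by simp [hps, hgp])).lt_or_eq with hlt | heq
    · simp [hrel.e_pow_apply_f_pow_of_lt (hue p.1) (huh p.1) hlt]
    have hne : p.1 ≠ q.1 := fun h1 ↦ hpq (Sigma.ext h1 ((Fin.heq_ext_iff (by rw [h1])).2 heq))
    obtain ⟨c', -, hc'u⟩ :=
      hrel.exists_e_pow_apply_f_pow (hue p.1) (huh p.1) (Nat.lt_succ_iff.1 p.2.2)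
    rw [← heq, hc'u]
    refine Submodule.mem_iSup_of_mem (n p.1 : K) (Submodule.mem_iSup_of_mem ?_ ?_)
    · exact_mod_cast hn.ne hne
    · exact Submodule.smul_mem _ _ (Submodule.smul_mem _ _
        (Module.End.mem_eigenspace_iff.2 (huh p.1)))
  have hsum' := congrArg (e ^ (q.2 : ℕ)) hsum
  rw [map_sum, map_zero, ← Finset.add_sum_erase _ _ hqs] at hsum'
  simp only [map_smul, hcu, smul_smul] at hsum'
  have hq0 : (g q * c) • u q.1 = 0 := Submodule.disjoint_def.1
    (Module.End.eigenspaces_iSupIndep h (n q.1 : K)) _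
    (Submodule.smul_mem _ _ (Module.End.mem_eigenspace_iff.2 (huh q.1)))
    (by rw [eq_neg_of_add_eq_zero_left hsum']; exact neg_mem (Submodule.sum_mem _ hrest))
  simp [hgq, hc, hu] at hq0

theorem iSupIndep_stringSpan [CharZero K] (hrel : Sl2Rel e h f) {ι : Type*} {n : ι → ℕ}
    (hn : Function.Injective n) {u : ι → V} (hu : ∀ i, u i ≠ 0) (hue : ∀ i, e (u i) = 0)
    (huh : ∀ i, h (u i) = (n i : K) • u i) : iSupIndep fun i ↦ stringSpan f (u i) (n i) :=
  (hrel.linearIndependent_sigma_f_pow hn hu hue huh).iSupIndep_span_range_sigma_fiber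

theorem iSup_stringSpan_eq_top [CharZero K] [FiniteDimensional K V] (hrel : Sl2Rel e h f)
    {ι : Type*} [Fintype ι] {n : ι → ℕ} (hn : Function.Injective n) {u : ι → V} (hu : ∀ i, u i ≠ 0)
    (hue : ∀ i, e (u i) = 0) (huh : ∀ i, h (u i) = (n i : K) • u i)
    (hdim : ∑ i, (n i + 1) = Module.finrank K V) : ⨆ i, stringSpan f (u i) (n i) = ⊤ :=
  (iSup_span_range_sigma_fiber fun p : Σ i, Fin (n i + 1) ↦ (f ^ (p.2 : ℕ)) (u p.1)).trans
    ((hrel.linearIndependent_sigma_f_pow hn hu hue huh).span_eq_top_of_card_eq_finrank'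
      (by simpa using hdim))

end Sl2Rel

section Tensor

open TensorProduct

variable {W : Type*} [AddCommGroup W] [Module K W]

theorem rTensor_add_lTensor_commutator (A C : Module.End K V) (B D : Module.End K W) :
    (A.rTensor W + B.lTensor V) * (C.rTensor W + D.lTensor V) -
        (C.rTensor W + D.lTensor V) * (A.rTensor W + B.lTensor V) =
      (A * C - C * A).rTensor W + (B * D - D * B).lTensor V := by
  have hAD : A.rTensor W * D.lTensor V = D.lTensor V * A.rTensor W :=
    (LinearMap.rTensor_comp_lTensor (f := A) (g := D)).trans
      (LinearMap.lTensor_comp_rTensor (f := A) (g := D)).symm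
  have hCB : C.rTensor W * B.lTensor V = B.lTensor V * C.rTensor W :=
    (LinearMap.rTensor_comp_lTensor (f := C) (g := B)).trans
      (LinearMap.lTensor_comp_rTensor (f := C) (g := B)).symm
  simp only [mul_add, add_mul, LinearMap.rTensor_sub, LinearMap.lTensor_sub,
    LinearMap.rTensor_mul, LinearMap.lTensor_mul, hAD, hCB]
  abel

theorem rTensor_add_lTensor_tmul (A : Module.End K V) (B : Module.End K W) (x : V) (y : W) :
    (A.rTensor W + B.lTensor V) (x ⊗ₜ[K] y) = A x ⊗ₜ[K] y + x ⊗ₜ[K] B y := rfl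

theorem Sl2Rel.tensor {eV hV fV : Module.End K V} {eW hW fW : Module.End K W}
    (hrelV : Sl2Rel eV hV fV) (hrelW : Sl2Rel eW hW fW) :
    Sl2Rel (eV.rTensor W + eW.lTensor V) (hV.rTensor W + hW.lTensor V)
      (fV.rTensor W + fW.lTensor V) := by
  refine ⟨?_, ?_, ?_⟩ <;>
    simp only [rTensor_add_lTensor_commutator, hrelV.1, hrelV.2.1, hrelV.2.2, hrelW.1, hrelW.2.1,
      hrelW.2.2, two_nsmul, LinearMap.rTensor_add, LinearMap.lTensor_add, LinearMap.rTensor_neg,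
      LinearMap.lTensor_neg] <;>
    abel

end Tensor

section Grading

open TensorProduct

def gradedPiece (V0 V1 : Submodule K V) (c : ZMod 2) : Submodule K V :=
  if c = 0 then V0 else V1

theorem mem_gradedPiece_iff {V0 V1 : Submodule K V} {c : ZMod 2} {x : V} :
    x ∈ gradedPiece V0 V1 c ↔ if c = 0 then x ∈ V0 else x ∈ V1 := by
  unfold gradedPiece; split_ifs <;> rfl

def IsOdd (V0 V1 : Submodule K V) (g : Module.End K V) : Prop :=
  ∀ c : ZMod 2, ∀ x ∈ gradedPiece V0 V1 c, g x ∈ gradedPiece V0 V1 (c + 1)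

theorem Sl2Grading.isOdd_f {e h f : Module.End K V} {V0 V1 : Submodule K V}
    (hgr : Sl2Grading e h f V0 V1) : IsOdd V0 V1 f := by
  intro c x hx
  fin_cases c
  exacts [hgr.2.2.2.2.2.1 x hx, hgr.2.2.2.2.2.2 x hx]

theorem IsOdd.pow_apply_mem {V0 V1 : Submodule K V} {g : Module.End K V} (hg : IsOdd V0 V1 g)
    {c : ZMod 2} {x : V} (hx : x ∈ gradedPiece V0 V1 c) (j : ℕ) :
    (g ^ j) x ∈ gradedPiece V0 V1 (c + j) := by
  induction j with
  | zero => simpa using hx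
  | succ j ih =>
    rw [pow_succ', Module.End.mul_apply, Nat.cast_succ, ← add_assoc]
    exact hg _ _ ih

theorem sl2GradedSub_span_range {V0 V1 : Submodule K V} {ι : Type*} {s : ι → V}
    (hs : ∀ i, ∃ c, s i ∈ gradedPiece V0 V1 c) :
    Sl2GradedSub V0 V1 (Submodule.span K (Set.range s)) := by
  refine le_antisymm (Submodule.span_le.2 ?_) (sup_le inf_le_left inf_le_left)
  rintro _ ⟨i, rfl⟩
  obtain ⟨c, hc⟩ := hs i
  have hmem : s i ∈ Submodule.span K (Set.range s) := Submodule.subset_span ⟨i, rfl⟩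
  fin_cases c
  · exact Submodule.mem_sup_left ⟨hmem, hc⟩
  · exact Submodule.mem_sup_right ⟨hmem, hc⟩

variable {W : Type*} [AddCommGroup W] [Module K W]

open LinearMap in
def tensorEven (V0 V1 : Submodule K V) (W0 W1 : Submodule K W) : Submodule K (V ⊗[K] W) :=
  range (map V0.subtype W0.subtype) ⊔ range (map V1.subtype W1.subtype)

open LinearMap in
def tensorOdd (V0 V1 : Submodule K V) (W0 W1 : Submodule K W) : Submodule K (V ⊗[K] W) :=
  range (map V0.subtype W1.subtype) ⊔ range (map V1.subtype W0.subtype)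

variable {V0 V1 : Submodule K V} {W0 W1 : Submodule K W}

theorem tmul_mem_gradedPiece_tensor {c d : ZMod 2} {x : V} {y : W}
    (hx : x ∈ gradedPiece V0 V1 c) (hy : y ∈ gradedPiece W0 W1 d) :
    x ⊗ₜ[K] y ∈ gradedPiece (tensorEven V0 V1 W0 W1) (tensorOdd V0 V1 W0 W1) (c + d) := by
  fin_cases c <;> fin_cases d
  · exact Submodule.mem_sup_left ⟨⟨x, hx⟩ ⊗ₜ ⟨y, hy⟩, rfl⟩
  · exact Submodule.mem_sup_left ⟨⟨x, hx⟩ ⊗ₜ ⟨y, hy⟩, rfl⟩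
  · exact Submodule.mem_sup_right ⟨⟨x, hx⟩ ⊗ₜ ⟨y, hy⟩, rfl⟩
  · exact Submodule.mem_sup_right ⟨⟨x, hx⟩ ⊗ₜ ⟨y, hy⟩, rfl⟩

theorem IsOdd.rTensor_add_lTensor {fV : Module.End K V} {fW : Module.End K W}
    (hfV : IsOdd V0 V1 fV) (hfW : IsOdd W0 W1 fW) :
    IsOdd (tensorEven V0 V1 W0 W1) (tensorOdd V0 V1 W0 W1) (fV.rTensor W + fW.lTensor V) := by
  have key : ∀ c d (s : gradedPiece V0 V1 c ⊗[K] gradedPiece W0 W1 d),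
      (fV.rTensor W + fW.lTensor V) (map (Submodule.subtype _) (Submodule.subtype _) s) ∈
        gradedPiece (tensorEven V0 V1 W0 W1) (tensorOdd V0 V1 W0 W1) (c + d + 1) := by
    intro c d s
    induction s using TensorProduct.induction_on with
    | zero => simp
    | tmul x y =>
      rw [map_tmul, rTensor_add_lTensor_tmul]
      refine add_mem ?_ ?_
      · simpa [add_right_comm] using tmul_mem_gradedPiece_tensor (hfV c x x.2) y.2
      · simpa [add_assoc] using tmul_mem_gradedPiece_tensor x.2 (hfW d y y.2)
    | add s t hs ht => rw [map_add, map_add]; exact add_mem hs ht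
  intro c t ht
  fin_cases c
  · obtain ⟨_, ⟨s, rfl⟩, _, ⟨s', rfl⟩, rfl⟩ := Submodule.mem_sup.1 ht
    rw [map_add]
    exact add_mem (key 0 0 s) (key 1 1 s')
  · obtain ⟨_, ⟨s, rfl⟩, _, ⟨s', rfl⟩, rfl⟩ := Submodule.mem_sup.1 ht
    rw [map_add]
    exact add_mem (key 0 1 s) (key 1 0 s')

end Grading

section ClebschGordan

open TensorProduct

variable {W : Type*} [AddCommGroup W] [Module K W]

variable (K) in
/-- The recursion is exactly the condition that `e` kill `cgVector`. -/
noncomputable def cgCoeff (a b i : ℕ) : ℕ → K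
  | 0 => 1
  | k + 1 => -((i - k) * (b - i + k + 1)) / ((k + 1) * (a - k)) * cgCoeff a b i k

theorem cgCoeff_succ_mul_add [CharZero K] {a b i k l : ℕ} (hkl : k + l + 1 = i) (hia : i ≤ a) :
    cgCoeff K a b i (k + 1) * ((k + 1) * (a - k)) + cgCoeff K a b i k * ((l + 1) * (b - l)) =
      0 := by
  have hk : (k : K) + 1 ≠ 0 := Nat.cast_add_one_ne_zero k
  have hak : (a : K) - k ≠ 0 := by rw [sub_ne_zero, Ne, Nat.cast_inj]; omega
  have hl : (l : K) = i - k - 1 := by rw [← hkl]; push_cast; ring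
  rw [cgCoeff, hl]
  field_simp
  ring

noncomputable def cgVector (fV : Module.End K V) (fW : Module.End K W) (v : V) (w : W)
    (a b i : ℕ) : V ⊗[K] W :=
  ∑ k ∈ Finset.range (i + 1), cgCoeff K a b i k • ((fV ^ k) v ⊗ₜ[K] (fW ^ (i - k)) w)

variable {eV hV fV : Module.End K V} {eW hW fW : Module.End K W} {v : V} {w : W}
  {a b i : ℕ}

theorem tensor_h_cgVector (hrelV : Sl2Rel eV hV fV) (hrelW : Sl2Rel eW hW fW)
    (hvh : hV v = (a : K) • v) (hwh : hW w = (b : K) • w) (hia : i ≤ a) (hib : i ≤ b) :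
    (hV.rTensor W + hW.lTensor V) (cgVector fV fW v w a b i) =
      ((a + b - 2 * i : ℕ) : K) • cgVector fV fW v w a b i := by
  simp only [cgVector, map_sum, map_smul, Finset.smul_sum]
  refine Finset.sum_congr rfl fun k hk ↦ ?_
  have hki : k ≤ i := Nat.lt_succ_iff.1 (Finset.mem_range.1 hk)
  rw [rTensor_add_lTensor_tmul, hrelV.h_apply_f_pow hvh, hrelW.h_apply_f_pow hwh, ← smul_tmul',
    tmul_smul, Nat.cast_sub hki, Nat.cast_sub (show 2 * i ≤ a + b by omega),
    smul_comm _ (cgCoeff K a b i k)]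
  match_scalars
  ring

theorem tensor_e_cgVector [CharZero K] (hrelV : Sl2Rel eV hV fV) (hrelW : Sl2Rel eW hW fW)
    (hve : eV v = 0) (hvh : hV v = (a : K) • v) (hwe : eW w = 0) (hwh : hW w = (b : K) • w)
    (hia : i ≤ a) :
    (eV.rTensor W + eW.lTensor V) (cgVector fV fW v w a b i) = 0 := by
  set c := cgCoeff K a b i
  -- the `eV`-part of the term `k + 1` cancels the `eW`-part of the term `k`
  have hpair : ∀ k ∈ Finset.range i,
      c (k + 1) • (eV ((fV ^ (k + 1)) v) ⊗ₜ[K] (fW ^ (i - (k + 1))) w) +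
        c k • ((fV ^ k) v ⊗ₜ[K] eW ((fW ^ (i - k)) w)) = 0 := by
    intro k hk
    obtain ⟨l, hl⟩ : ∃ l, i - k = l + 1 := ⟨i - k - 1, by have := Finset.mem_range.1 hk; omega⟩
    rw [hl, show i - (k + 1) = l by omega, hrelV.e_apply_f_pow_succ hve hvh,
      hrelW.e_apply_f_pow_succ hwe hwh, ← smul_tmul', tmul_smul, smul_smul, smul_smul, ← add_smul,
      cgCoeff_succ_mul_add (by omega) hia, zero_smul]
  simp only [cgVector, map_sum, map_smul, rTensor_add_lTensor_tmul, smul_add,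
    Finset.sum_add_distrib]
  rw [Finset.sum_range_succ', Finset.sum_range_succ _ i, add_add_add_comm,
    ← Finset.sum_add_distrib, Finset.sum_eq_zero hpair]
  simp [hve, hwe]

theorem cgVector_ne_zero [CharZero K]
    (hv : LinearIndependent K fun k : Fin (a + 1) ↦ (fV ^ (k : ℕ)) v)
    (hw : LinearIndependent K fun l : Fin (b + 1) ↦ (fW ^ (l : ℕ)) w) (hia : i ≤ a) (hib : i ≤ b) :
    cgVector fV fW v w a b i ≠ 0 := by
  have hinj : Function.Injective fun k : Fin (i + 1) ↦
      ((⟨k, by omega⟩ : Fin (a + 1)), (⟨i - k, by omega⟩ : Fin (b + 1))) :=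
    fun k l hkl ↦ Fin.ext (congrArg (fun p ↦ (p.1 : ℕ)) hkl)
  have hli := (hv.tmul_of_isDomain hw).comp _ hinj
  intro h0
  have := Fintype.linearIndependent_iff.1 hli (fun k ↦ cgCoeff K a b i k)
    (by rw [← h0, cgVector, ← Fin.sum_univ_eq_sum_range]; rfl) 0
  simp [cgCoeff] at this

theorem cgVector_mem_gradedPiece {V0 V1 : Submodule K V} {W0 W1 : Submodule K W}
    (hfV : IsOdd V0 V1 fV) (hfW : IsOdd W0 W1 fW) {c d : ZMod 2}
    (hv : v ∈ gradedPiece V0 V1 c) (hw : w ∈ gradedPiece W0 W1 d) :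
    cgVector fV fW v w a b i ∈
      gradedPiece (tensorEven V0 V1 W0 W1) (tensorOdd V0 V1 W0 W1) (c + d + i) := by
  refine Submodule.sum_mem _ fun k hk ↦ Submodule.smul_mem _ _ ?_
  convert tmul_mem_gradedPiece_tensor (hfV.pow_apply_mem hv k) (hfW.pow_apply_mem hw (i - k))
    using 2
  push_cast [Nat.cast_sub (Nat.lt_succ_iff.1 (Finset.mem_range.1 hk))]
  ring

end ClebschGordan

theorem sum_range_add_sub_two_mul_add_one_of_le {a b : ℕ} (hab : a ≤ b) :
    ∑ i ∈ Finset.range (a + 1), (a + b - 2 * i + 1) = (a + 1) * (b + 1) := by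
  induction a generalizing b with
  | zero => simp
  | succ a ih =>
    obtain ⟨b, rfl⟩ : ∃ b', b = b' + 1 := ⟨b - 1, by omega⟩
    have hterm : ∀ k ∈ Finset.range (a + 1),
        a + 1 + (b + 1) - 2 * (k + 1) + 1 = a + b - 2 * k + 1 :=
      fun k hk ↦ by have := Finset.mem_range.1 hk; omega
    rw [Finset.sum_range_succ', Finset.sum_congr rfl hterm, ih (by omega), Nat.mul_zero,
      Nat.sub_zero]
    ring

theorem sum_range_min_add_sub_two_mul_add_one (a b : ℕ) :
    ∑ i ∈ Finset.range (min a b + 1), (a + b - 2 * i + 1) = (a + 1) * (b + 1) := by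
  rcases le_total a b with hab | hba
  · rw [min_eq_left hab, sum_range_add_sub_two_mul_add_one_of_le hab]
  · rw [min_eq_right hba, add_comm a b, sum_range_add_sub_two_mul_add_one_of_le hba, mul_comm]

open TensorProduct in
theorem stmt11_general {K V W : Type*} [Field K] [CharZero K]
    [AddCommGroup V] [Module K V] [FiniteDimensional K V]
    [AddCommGroup W] [Module K W] [FiniteDimensional K W]
    (eV hV fV : Module.End K V) (hrelV : Sl2Rel eV hV fV)
    (V0 V1 : Submodule K V) (hgrV : Sl2Grading eV hV fV V0 V1)
    (hirrV : ∀ U : Submodule K V, Sl2Inv eV hV fV U → U = ⊥ ∨ U = ⊤)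
    (lam1 : ℕ) (w1 : ZMod 2)
    (v : V) (hv : v ≠ 0) (hve : eV v = 0) (hvh : hV v = (lam1 : K) • v)
    (hvpar : if w1 = 0 then v ∈ V0 else v ∈ V1)
    (eW hW fW : Module.End K W) (hrelW : Sl2Rel eW hW fW)
    (W0 W1 : Submodule K W) (hgrW : Sl2Grading eW hW fW W0 W1)
    (hirrW : ∀ U : Submodule K W, Sl2Inv eW hW fW U → U = ⊥ ∨ U = ⊤)
    (lam2 : ℕ) (w2 : ZMod 2)
    (w : W) (hw : w ≠ 0) (hwe : eW w = 0) (hwh : hW w = (lam2 : K) • w)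
    (hwpar : if w2 = 0 then w ∈ W0 else w ∈ W1)
    -- the sl2-action on the tensor product
    (eT hT fT : Module.End K (V ⊗[K] W))
    (heT : eT = LinearMap.rTensor W eV + LinearMap.lTensor V eW)
    (hhT : hT = LinearMap.rTensor W hV + LinearMap.lTensor V hW)
    (hfT : fT = LinearMap.rTensor W fV + LinearMap.lTensor V fW)
    -- the induced grading on the tensor product
    (TE TO : Submodule K (V ⊗[K] W))
    (hTE : TE = LinearMap.range (TensorProduct.map V0.subtype W0.subtype) ⊔
                LinearMap.range (TensorProduct.map V1.subtype W1.subtype))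
    (hTO : TO = LinearMap.range (TensorProduct.map V0.subtype W1.subtype) ⊔
                LinearMap.range (TensorProduct.map V1.subtype W0.subtype)) :
    ∃ U : Fin (min lam1 lam2 + 1) → Submodule K (V ⊗[K] W),
      iSupIndep U ∧ (⨆ i, U i) = ⊤ ∧
      ∀ i : Fin (min lam1 lam2 + 1),
        Sl2Inv eT hT fT (U i) ∧ Sl2GradedSub TE TO (U i) ∧ U i ≠ ⊥ ∧
        (∀ U' : Submodule K (V ⊗[K] W), U' ≤ U i → Sl2Inv eT hT fT U' →
          Sl2GradedSub TE TO U' → U' = ⊥ ∨ U' = U i) ∧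
        ∃ u ∈ U i, u ≠ 0 ∧ eT u = 0 ∧
          hT u = ((lam1 + lam2 - 2 * (i : ℕ) : ℕ) : K) • u ∧
          (if w1 + w2 + ((i : ℕ) : ZMod 2) = 0 then u ∈ TE else u ∈ TO) := by
  subst heT hhT hfT
  obtain rfl : TE = tensorEven V0 V1 W0 W1 := hTE
  obtain rfl : TO = tensorOdd V0 V1 W0 W1 := hTO
  have hrelT := hrelV.tensor hrelW
  have hle : ∀ i : Fin (min lam1 lam2 + 1), (i : ℕ) ≤ lam1 ∧ (i : ℕ) ≤ lam2 :=
    fun i ↦ by have := i.2; omega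
  let n : Fin (min lam1 lam2 + 1) → ℕ := fun i ↦ lam1 + lam2 - 2 * i
  let u : Fin (min lam1 lam2 + 1) → V ⊗[K] W := fun i ↦ cgVector fV fW v w lam1 lam2 i
  have hu : ∀ i, u i ≠ 0 := fun i ↦ cgVector_ne_zero (hrelV.linearIndependent_f_pow hv hve hvh)
    (hrelW.linearIndependent_f_pow hw hwe hwh) (hle i).1 (hle i).2
  have hue : ∀ i, (eV.rTensor W + eW.lTensor V) (u i) = 0 :=
    fun i ↦ tensor_e_cgVector hrelV hrelW hve hvh hwe hwh (hle i).1
  have huh : ∀ i, (hV.rTensor W + hW.lTensor V) (u i) = (n i : K) • u i :=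
    fun i ↦ tensor_h_cgVector hrelV hrelW hvh hwh (hle i).1 (hle i).2
  have hn : Function.Injective n := fun i j hij ↦ by
    have := hle i; have := hle j; simp only [n] at hij; omega
  have hpar (i : Fin (min lam1 lam2 + 1)) (j : ℕ) : ((fV.rTensor W + fW.lTensor V) ^ j) (u i) ∈
      gradedPiece (tensorEven V0 V1 W0 W1) (tensorOdd V0 V1 W0 W1) (w1 + w2 + (i : ℕ) + j) :=
    (hgrV.isOdd_f.rTensor_add_lTensor hgrW.isOdd_f).pow_apply_mem
      (cgVector_mem_gradedPiece hgrV.isOdd_f hgrW.isOdd_f (mem_gradedPiece_iff.2 hvpar)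
        (mem_gradedPiece_iff.2 hwpar)) j
  refine ⟨fun i ↦ stringSpan _ (u i) (n i), hrelT.iSupIndep_stringSpan hn hu hue huh,
    hrelT.iSup_stringSpan_eq_top hn hu hue huh ?_, fun i ↦ ⟨?_, ?_, ?_, ?_, ?_⟩⟩
  · rw [Module.finrank_tensorProduct, hrelV.finrank_eq_add_one hirrV hv hve hvh,
      hrelW.finrank_eq_add_one hirrW hw hwe hwh, ← sum_range_min_add_sub_two_mul_add_one,
      ← Fin.sum_univ_eq_sum_range (fun i ↦ lam1 + lam2 - 2 * i + 1)]
  · exact hrelT.sl2Inv_stringSpan (hue i) (huh i) (hrelT.f_pow_succ_apply_eq_zero (hue i) (huh i))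
  · exact sl2GradedSub_span_range fun k ↦ ⟨_, hpar i k⟩
  · exact (Submodule.ne_bot_iff _).2 ⟨u i, mem_stringSpan_self _ _ _, hu i⟩
  · exact fun U' hU' hinv _ ↦ hrelT.eq_bot_or_eq_stringSpan (hue i) (huh i) hU' hinv.1 hinv.2.2
  · refine ⟨u i, mem_stringSpan_self _ _ _, hu i, hue i, huh i, ?_⟩
    exact mem_gradedPiece_iff.1 (by simpa using hpar i 0)

open TensorProduct in
/-- Graded Clebsch-Gordan rule: V_{λ1}^{w1} ⊗ V_{λ2}^{w2} decomposes as the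
direct sum, over i = 0, ..., min(λ1,λ2), of irreducible graded subrepresentations with
highest weight λ1+λ2-2i and highest-weight-vector parity w1+w2+i. -/
theorem stmt11 {K V W : Type*} [Field K] [CharZero K]
    [AddCommGroup V] [Module K V] [FiniteDimensional K V] [Nontrivial V]
    [AddCommGroup W] [Module K W] [FiniteDimensional K W] [Nontrivial W]
    (eV hV fV : Module.End K V) (hrelV : Sl2Rel eV hV fV)
    (V0 V1 : Submodule K V) (hgrV : Sl2Grading eV hV fV V0 V1)
    (hirrV : ∀ U : Submodule K V, Sl2Inv eV hV fV U → U = ⊥ ∨ U = ⊤)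
    (lam1 : ℕ) (w1 : ZMod 2)
    (v : V) (hv : v ≠ 0) (hve : eV v = 0) (hvh : hV v = (lam1 : K) • v)
    (hvpar : if w1 = 0 then v ∈ V0 else v ∈ V1)
    (eW hW fW : Module.End K W) (hrelW : Sl2Rel eW hW fW)
    (W0 W1 : Submodule K W) (hgrW : Sl2Grading eW hW fW W0 W1)
    (hirrW : ∀ U : Submodule K W, Sl2Inv eW hW fW U → U = ⊥ ∨ U = ⊤)
    (lam2 : ℕ) (w2 : ZMod 2)
    (w : W) (hw : w ≠ 0) (hwe : eW w = 0) (hwh : hW w = (lam2 : K) • w)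
    (hwpar : if w2 = 0 then w ∈ W0 else w ∈ W1)
    -- the sl2-action on the tensor product
    (eT hT fT : Module.End K (V ⊗[K] W))
    (heT : eT = LinearMap.rTensor W eV + LinearMap.lTensor V eW)
    (hhT : hT = LinearMap.rTensor W hV + LinearMap.lTensor V hW)
    (hfT : fT = LinearMap.rTensor W fV + LinearMap.lTensor V fW)
    -- the induced grading on the tensor product
    (TE TO : Submodule K (V ⊗[K] W))
    (hTE : TE = LinearMap.range (TensorProduct.map V0.subtype W0.subtype) ⊔
                LinearMap.range (TensorProduct.map V1.subtype W1.subtype))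
    (hTO : TO = LinearMap.range (TensorProduct.map V0.subtype W1.subtype) ⊔
                LinearMap.range (TensorProduct.map V1.subtype W0.subtype)) :
    ∃ U : Fin (min lam1 lam2 + 1) → Submodule K (V ⊗[K] W),
      iSupIndep U ∧ (⨆ i, U i) = ⊤ ∧
      ∀ i : Fin (min lam1 lam2 + 1),
        Sl2Inv eT hT fT (U i) ∧ Sl2GradedSub TE TO (U i) ∧ U i ≠ ⊥ ∧
        (∀ U' : Submodule K (V ⊗[K] W), U' ≤ U i → Sl2Inv eT hT fT U' →
          Sl2GradedSub TE TO U' → U' = ⊥ ∨ U' = U i) ∧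
        ∃ u ∈ U i, u ≠ 0 ∧ eT u = 0 ∧
          hT u = ((lam1 + lam2 - 2 * (i : ℕ) : ℕ) : K) • u ∧
          (if w1 + w2 + ((i : ℕ) : ZMod 2) = 0 then u ∈ TE else u ∈ TO) :=
  stmt11_general eV hV fV hrelV V0 V1 hgrV hirrV lam1 w1 v hv hve hvh hvpar eW hW fW hrelW W0 W1
    hgrW hirrW lam2 w2 w hw hwe hwh hwpar eT hT fT heT hhT hfT TE TO hTE hTO
end
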